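/- arXiv:2002.11941 — 2 statements merged into one kernel-verified Lean document; each statement's English description precedes it below -/
import Mathlib

section
/- Let L/K be an extension of number fields, let η ∈ O_K^× be a unit of O_K, let 𝔓 be a prime ideal of O_L lying over a prime ideal 𝔭 of O_K. If 𝔓 is a non-Wieferich prime of O_L with respect to η, then 𝔭 is a non-Wieferich prime of O_K with respect to η. -/
/-!
The first condition for `𝔭` is Fermat's little theorem in the finite field `𝓞 K ⧸ 𝔭`. For the
second, `N(𝔓) = N(𝔭) ^ f` with `f` the residue degree, so `N(𝔭) - 1 ∣ N(𝔓) - 1`; hence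
`η ^ (N(𝔭) - 1) ≡ 1 (mod 𝔭²)` would give `η ^ (N(𝔓) - 1) ≡ 1 (mod 𝔭²)`, and so modulo `𝔓²`
because `𝔭 ⊆ 𝔓`.
-/

open NumberField

/-- A prime ideal `π` of a ring `S` (e.g. the ring of integers of a number field) is a
non-Wieferich prime with respect to `η ∈ S` if `η^(N(π)-1) ≡ 1 (mod π)` and
`η^(N(π)-1) ≢ 1 (mod π²)`, where `N(π) = |S ⧸ π|` is the absolute norm of `π`. -/
def IsNonWieferich {S : Type*} [CommRing S] [Nontrivial S] [IsDedekindDomain S]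
    [Module.Free ℤ S] (η : S) (π : Ideal S) : Prop :=
  η ^ (Ideal.absNorm π - 1) - 1 ∈ π ∧ η ^ (Ideal.absNorm π - 1) - 1 ∉ π ^ 2

open Ideal

section
variable {S : Type*} [CommRing S] [IsDedekindDomain S] [Module.Free ℤ S]

theorem IsNonWieferich.absNorm_ne_zero {η : S} {π : Ideal S}
    (h : IsNonWieferich η π) : absNorm π ≠ 0 := by
  intro h0
  -- the exponent `N(π) - 1` truncates to `0`, so `η ^ 0 - 1 = 0 ∈ π²`
  exact h.2 (by simp [h0])

theorem Ideal.pow_absNorm_sub_one_sub_one_mem {𝔭 : Ideal S} [𝔭.IsMaximal] [Finite (S ⧸ 𝔭)]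
    {x : S} (hx : x ∉ 𝔭) : x ^ (absNorm 𝔭 - 1) - 1 ∈ 𝔭 := by
  let := Quotient.field 𝔭
  have := Fintype.ofFinite (S ⧸ 𝔭)
  rw [← Quotient.eq_zero_iff_mem, map_sub, map_pow, map_one, sub_eq_zero, absNorm_apply,
    Submodule.cardQuot_apply, Nat.card_eq_fintype_card]
  exact FiniteField.pow_card_sub_one_eq_one _ (by rwa [Ne, Quotient.eq_zero_iff_mem])

end

theorem Ideal.absNorm_sub_one_dvd_absNorm_sub_one {R S : Type*} [CommRing R]
    [IsDedekindDomain R] [Module.Free ℤ R] [CommRing S] [IsDedekindDomain S] [Module.Free ℤ S]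
    [Algebra R S] [Module.Finite R S] (P : Ideal S) (p : Ideal R) [P.LiesOver p]
    (hp : p.IsPrime) (hp_ne_bot : p ≠ ⊥) : absNorm p - 1 ∣ absNorm P - 1 := by
  rw [absNorm_eq_pow_inertiaDeg'_of_liesOver P p hp hp_ne_bot]
  exact Nat.sub_one_dvd_pow_sub_one _ _

theorem Ideal.pow_sub_one_mem_of_dvd {R : Type*} [CommRing R] {I : Ideal R} {x : R} {m n : ℕ}
    (hmn : m ∣ n) (hx : x ^ m - 1 ∈ I) : x ^ n - 1 ∈ I :=
  mem_of_dvd _ (dvd_pow_sub_one_of_dvd hmn) hx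

theorem IsNonWieferich.under {R S : Type*} [CommRing R] [IsDedekindDomain R]
    [Module.Free ℤ R] [Module.Finite ℤ R] [CommRing S] [IsDedekindDomain S] [Module.Free ℤ S]
    [Module.Finite ℤ S] [Algebra R S] [Module.Finite R S] {η : R} (hη : IsUnit η)
    {P : Ideal S} [P.IsPrime] (hw : IsNonWieferich (algebraMap R S η) P) :
    IsNonWieferich η (P.under R) := by
  have hP : P ≠ ⊥ := absNorm_eq_zero_iff.not.mp hw.absNorm_ne_zero
  have : P.IsMaximal := ‹P.IsPrime›.isMaximal hP
  have hp : P.under R ≠ ⊥ := under_ne_bot R hP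
  have : Finite (R ⧸ P.under R) := (absNorm_ne_zero_iff _).mp (absNorm_eq_zero_iff.not.mpr hp)
  refine ⟨pow_absNorm_sub_one_sub_one_mem fun hηp ↦ ?_, fun h ↦ hw.2 ?_⟩
  · exact IsPrime.ne_top' (eq_top_of_isUnit_mem _ hηp hη)
  · have hdvd := absNorm_sub_one_dvd_absNorm_sub_one P _ inferInstance hp
    simpa using le_comap_pow _ 2 (pow_sub_one_mem_of_dvd hdvd h)

theorem isNonWieferich_comap_general (K L : Type*) [Field K] [NumberField K] [Field L] [NumberField L]
    [Algebra K L] (η : (𝓞 K)ˣ)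
    (𝔓 : Ideal (𝓞 L)) (h𝔓p : 𝔓.IsPrime)
    (𝔭 : Ideal (𝓞 K)) (hover : 𝔓.comap (algebraMap (𝓞 K) (𝓞 L)) = 𝔭)
    (hw : IsNonWieferich (algebraMap (𝓞 K) (𝓞 L) (η : 𝓞 K)) 𝔓) :
    IsNonWieferich (η : 𝓞 K) 𝔭 :=
  hover ▸ hw.under η.isUnit

/-- Let `L/K` be an extension of number fields, `η` a unit of `𝓞 K`, and `𝔓` a prime ideal of
`𝓞 L` lying over a prime ideal `𝔭` of `𝓞 K`.  If `𝔓` is a non-Wieferich prime of `𝓞 L` with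
respect to `η`, then `𝔭` is a non-Wieferich prime of `𝓞 K` with respect to `η`. -/
theorem isNonWieferich_comap (K L : Type*) [Field K] [NumberField K] [Field L] [NumberField L]
    [Algebra K L] (η : (𝓞 K)ˣ)
    (𝔓 : Ideal (𝓞 L)) (h𝔓p : 𝔓.IsPrime) (h𝔓b : 𝔓 ≠ ⊥)
    (𝔭 : Ideal (𝓞 K)) (hover : 𝔓.comap (algebraMap (𝓞 K) (𝓞 L)) = 𝔭)
    (hw : IsNonWieferich (algebraMap (𝓞 K) (𝓞 L) (η : 𝓞 K)) 𝔓) :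
    IsNonWieferich (η : 𝓞 K) 𝔭 :=
  isNonWieferich_comap_general K L η 𝔓 h𝔓p 𝔭 hover hw
end

section
/- Let L/K be an extension of number fields, let η ∈ O_K^× be a unit of O_K, and let 𝔭 be a prime ideal of O_K which splits completely in L/K. If 𝔭 is a non-Wieferich prime of O_K with respect to η, then every prime ideal 𝔓 of O_L lying over 𝔭 is a non-Wieferich prime of O_L with respect to η. -/
/-!
If `x ∈ 𝔭 \ 𝔭²` then `𝔭 = (x) + 𝔭²`, since no ideal lies strictly between `𝔭²` and `𝔭` in a
Dedekind domain. Extending to `O_L`, if `x` were in `𝔓²` then so would be `𝔭 O_L`, i.e. `𝔓` would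
ramify over `𝔭`. Residue degree one makes `N(𝔓) = N(𝔭)`, so `x = η ^ (N(𝔭) - 1) - 1` is the very
element whose membership in `𝔓` and `𝔓²` decides the non-Wieferich condition upstairs.
-/

open NumberField

namespace Ideal

theorem span_singleton_sup_sq_eq_of_mem_of_notMem_sq {R : Type*} [CommRing R] [IsDedekindDomain R]
    {p : Ideal R} [p.IsPrime] {x : R} (hx : x ∈ p) (hx2 : x ∉ p ^ 2) :
    span {x} ⊔ p ^ 2 = p := by
  have hp : p ≠ ⊥ := by
    rintro rfl
    exact hx2 (by rw [mem_bot.mp hx]; exact zero_mem _)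
  have hlt : p ^ (1 + 1) < span {x} ⊔ p ^ 2 :=
    lt_of_le_of_ne le_sup_right fun h ↦ hx2 (h ▸ mem_sup_left (mem_span_singleton_self x))
  have hle : span {x} ⊔ p ^ 2 ≤ p ^ 1 := by
    rw [pow_one]
    exact sup_le ((span_singleton_le_iff_mem p).mpr hx) (pow_le_self two_ne_zero)
  simpa using eq_prime_pow_of_succ_lt_of_le hp hlt hle

theorem algebraMap_notMem_sq_of_ramificationIdx'_eq_one {R S : Type*} [CommRing R]
    [IsDedekindDomain R] [CommRing S] [Algebra R S] {p : Ideal R} [p.IsPrime] {P : Ideal S}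
    [P.LiesOver p] (he : ramificationIdx' p P = 1) {x : R} (hx : x ∈ p) (hx2 : x ∉ p ^ 2) :
    algebraMap R S x ∉ P ^ 2 := by
  intro hxP
  have hp : p = P.comap (algebraMap R S) := P.over_def p
  refine (ramificationIdx'_ne_one_iff (map_le_of_le_comap hp.le)).mpr ?_ he
  rw [map_le_iff_le_comap, ← span_singleton_sup_sq_eq_of_mem_of_notMem_sq hx hx2]
  refine sup_le ((span_singleton_le_iff_mem _).mpr hxP) ?_
  calc p ^ 2 = P.comap (algebraMap R S) ^ 2 := by rw [← hp]
    _ ≤ (P ^ 2).comap (algebraMap R S) := le_comap_pow _ 2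

end Ideal

theorem IsNonWieferich.algebraMap_of_liesOver {R S : Type*} [CommRing R] [IsDedekindDomain R]
    [Module.Free ℤ R] [CommRing S] [IsDedekindDomain S] [Module.Free ℤ S]
    [Algebra R S] {p : Ideal R} [p.IsPrime] {P : Ideal S} [P.LiesOver p] {η : R}
    (hw : IsNonWieferich η p) (hnorm : Ideal.absNorm P = Ideal.absNorm p)
    (he : Ideal.ramificationIdx' p P = 1) :
    IsNonWieferich (algebraMap R S η) P := by
  have hpow : algebraMap R S η ^ (Ideal.absNorm P - 1) - 1 =
      algebraMap R S (η ^ (Ideal.absNorm p - 1) - 1) := by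
    rw [hnorm, map_sub, map_pow, map_one]
  rw [IsNonWieferich, hpow]
  exact ⟨Ideal.mem_comap.mp ((P.over_def p) ▸ hw.1),
    Ideal.algebraMap_notMem_sq_of_ramificationIdx'_eq_one he hw.1 hw.2⟩

/-- Let `L/K` be an extension of number fields, `η` a unit of `𝓞 K`, and `𝔭` a prime ideal of
`𝓞 K` which splits completely in `L/K` (every prime of `𝓞 L` above `𝔭` has ramification index
and residue degree `1`).  If `𝔭` is a non-Wieferich prime of `𝓞 K` with respect to `η`, then
every prime ideal `𝔓` of `𝓞 L` lying over `𝔭` is a non-Wieferich prime of `𝓞 L` with respect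
to `η`. -/
theorem isNonWieferich_of_splitsCompletely (K L : Type*) [Field K] [NumberField K]
    [Field L] [NumberField L] [Algebra K L] (η : (𝓞 K)ˣ)
    (𝔭 : Ideal (𝓞 K)) (h𝔭p : 𝔭.IsPrime) (h𝔭b : 𝔭 ≠ ⊥)
    (hsplit : ∀ 𝔓 : Ideal (𝓞 L), 𝔓.IsPrime → 𝔓.comap (algebraMap (𝓞 K) (𝓞 L)) = 𝔭 →
      Ideal.ramificationIdx' 𝔭 𝔓 = 1 ∧
      Ideal.inertiaDeg' 𝔭 𝔓 = 1)
    (hw : IsNonWieferich (η : 𝓞 K) 𝔭) :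
    ∀ 𝔓 : Ideal (𝓞 L), 𝔓.IsPrime → 𝔓.comap (algebraMap (𝓞 K) (𝓞 L)) = 𝔭 →
      IsNonWieferich (algebraMap (𝓞 K) (𝓞 L) (η : 𝓞 K)) 𝔓 := by
  intro 𝔓 h𝔓p hcomap
  have : 𝔓.LiesOver 𝔭 := ⟨hcomap.symm⟩
  obtain ⟨he, hf⟩ := hsplit 𝔓 h𝔓p hcomap
  have hnorm : Ideal.absNorm 𝔓 = Ideal.absNorm 𝔭 := by
    rw [Ideal.absNorm_eq_pow_inertiaDeg'_of_liesOver 𝔓 𝔭 h𝔭p h𝔭b, hf, pow_one]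
  exact hw.algebraMap_of_liesOver hnorm he
end
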